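/- arXiv:1803.02754 — 7 statements merged into one kernel-verified Lean document; each statement's English description precedes it below -/
import Mathlib

section
/- For non-negative integers r, t, and all real x, the reversed truncated binomial polynomial satisfies the shift identity: sum_{j=0}^{r} C(t+j, j) * (x+1)^{r-j} = sum_{j=0}^{r} C(t+r+1, j) * x^{r-j}. -/
theorem truncated_binomial_shift (r t : ℕ) (x : ℝ) :
    ∑ j ∈ Finset.range (r + 1), (Nat.choose (t + j) j : ℝ) * (x + 1) ^ (r - j) =
      ∑ j ∈ Finset.range (r + 1), (Nat.choose (t + r + 1) j : ℝ) * x ^ (r - j) := by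
  induction r with
  | zero => simp
  | succ r ih =>
    -- LHS recurrence
    have hL : ∑ j ∈ Finset.range (r + 1 + 1), (Nat.choose (t + j) j : ℝ) * (x + 1) ^ (r + 1 - j)
        = (x + 1) * ∑ j ∈ Finset.range (r + 1), (Nat.choose (t + j) j : ℝ) * (x + 1) ^ (r - j)
          + (Nat.choose (t + r + 1) (r + 1) : ℝ) := by
      rw [Finset.sum_range_succ, Finset.mul_sum]
      have h : ∀ j ∈ Finset.range (r + 1), (Nat.choose (t + j) j : ℝ) * (x + 1) ^ (r + 1 - j)
          = (x + 1) * ((Nat.choose (t + j) j : ℝ) * (x + 1) ^ (r - j)) := by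
        intro j hj
        rw [Finset.mem_range] at hj
        have hej : r + 1 - j = (r - j) + 1 := by omega
        rw [hej, pow_succ]; ring
      rw [Finset.sum_congr rfl h]
      simp [Nat.add_assoc]
    -- RHS recurrence
    have hR : ∑ j ∈ Finset.range (r + 1 + 1), (Nat.choose (t + (r + 1) + 1) j : ℝ) * x ^ (r + 1 - j)
        = (x + 1) * ∑ j ∈ Finset.range (r + 1), (Nat.choose (t + r + 1) j : ℝ) * x ^ (r - j)
          + (Nat.choose (t + r + 1) (r + 1) : ℝ) := by
      rw [Finset.sum_range_succ']
      have h1 : ∀ i ∈ Finset.range (r + 1),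
          (Nat.choose (t + (r + 1) + 1) (i + 1) : ℝ) * x ^ (r + 1 - (i + 1))
          = (Nat.choose (t + r + 1) i : ℝ) * x ^ (r - i)
            + (Nat.choose (t + r + 1) (i + 1) : ℝ) * x ^ (r - i) := by
        intro i hi
        have : t + (r + 1) + 1 = (t + r + 1) + 1 := by omega
        rw [this, Nat.choose_succ_succ]
        have : r + 1 - (i + 1) = r - i := by omega
        rw [this]
        push_cast
        ring
      rw [Finset.sum_congr rfl h1, Finset.sum_add_distrib]
      -- second sum: peel last term
      rw [Finset.sum_range_succ (fun i => (Nat.choose (t + r + 1) (i + 1) : ℝ) * x ^ (r - i))]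
      -- now rewrite x * RHSr
      have h2 : (x + 1) * ∑ j ∈ Finset.range (r + 1), (Nat.choose (t + r + 1) j : ℝ) * x ^ (r - j)
          = (∑ j ∈ Finset.range (r + 1), (Nat.choose (t + r + 1) j : ℝ) * x ^ (r + 1 - j))
            + ∑ j ∈ Finset.range (r + 1), (Nat.choose (t + r + 1) j : ℝ) * x ^ (r - j) := by
        rw [add_mul, one_mul, Finset.mul_sum]
        congr 1
        refine Finset.sum_congr rfl fun j hj => ?_
        rw [Finset.mem_range] at hj
        have hej : r + 1 - j = (r - j) + 1 := by omega
        rw [hej, pow_succ]; ring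
      rw [h2]
      rw [Finset.sum_range_succ' (fun j => (Nat.choose (t + r + 1) j : ℝ) * x ^ (r + 1 - j))]
      simp only [Nat.choose_zero_right, Nat.cast_one, one_mul, Nat.sub_zero, Nat.sub_self,
        pow_zero, mul_one, Nat.add_sub_cancel]
      have h3 : ∀ i ∈ Finset.range r,
          (Nat.choose (t + r + 1) (i + 1) : ℝ) * x ^ (r + 1 - (i + 1))
          = (Nat.choose (t + r + 1) (i + 1) : ℝ) * x ^ (r - i) := by
        intro i hi
        congr 2
        omega
      rw [Finset.sum_congr rfl h3]
      ring
    rw [hL, hR, ih]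
end

section
/- For integers n and r with 0 <= r <= n, and all real x: sum_{j=0}^{r} C(n, j) (x-1)^j = sum_{j=0}^{r} (-1)^{r-j} C(n, j) C(n-j-1, r-j) x^j. -/
/-!
Induct on `r`. Raising `r` by one adds `C(n, r+1) (x - 1)^(r+1)` to the left side; expanding it by
the binomial theorem, the coefficient of `x^j` it contributes is `(-1)^(r+1-j) C(n, r+1) C(r+1, j)`,
and by trinomial revision `C(n, r+1) C(r+1, j) = C(n, j) C(n-j, r+1-j)` followed by Pascal's rule
for `C(n-j, r+1-j)` this is exactly the change in the coefficient on the right.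
-/

open Finset

theorem Nat.choose_mul_choose_eq_choose_mul_add (j k m : ℕ) :
    (j + m + 1).choose (j + k + 1) * (j + k + 1).choose j =
      (j + m + 1).choose j * (m.choose k + m.choose (k + 1)) := by
  rw [Nat.choose_mul (by omega), ← Nat.choose_succ_succ']
  congr 2 <;> omega

theorem alternating_choose_sum_add_choose_mul_sub_one_pow {R : Type*} [CommRing R] {n r : ℕ}
    (hrn : r < n) (x : R) :
    ∑ j ∈ range (r + 1), (-1) ^ (r - j) * (n.choose j : R) * ((n - j - 1).choose (r - j) : R) * x ^ j
        + n.choose (r + 1) * (x - 1) ^ (r + 1) =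
      ∑ j ∈ range (r + 2),
        (-1) ^ (r + 1 - j) * (n.choose j : R) * ((n - j - 1).choose (r + 1 - j) : R) * x ^ j := by
  rw [sub_pow, mul_sum, sum_range_succ _ (r + 1), sum_range_succ _ (r + 1), ← add_assoc,
    ← sum_add_distrib]
  congr 1
  · refine sum_congr rfl fun j hj => ?_
    obtain ⟨k, rfl⟩ := Nat.exists_eq_add_of_le (Nat.lt_succ_iff.mp (mem_range.mp hj))
    obtain ⟨m, rfl⟩ : ∃ m, n = j + m + 1 := ⟨n - j - 1, by omega⟩
    have hchoose := congrArg (Nat.cast (R := R)) (Nat.choose_mul_choose_eq_choose_mul_add j k m)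
    push_cast at hchoose
    have hsign : (-1 : R) ^ (j + (j + k + 1)) = -(-1) ^ k := by
      rw [show j + (j + k + 1) = 2 * j + k + 1 by omega, pow_succ, pow_add, pow_mul]
      simp
    rw [show j + k + 1 - j = k + 1 by omega, show j + k - j = k by omega,
      show j + m + 1 - j - 1 = m by omega, one_pow, mul_one, hsign, pow_succ]
    linear_combination (-(-1) ^ k * x ^ j) * hchoose
  · simp

theorem truncated_binomial_translate (n r : ℕ) (hr : r ≤ n) (x : ℝ) :
    ∑ j ∈ Finset.range (r + 1), (Nat.choose n j : ℝ) * (x - 1) ^ j =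
      ∑ j ∈ Finset.range (r + 1),
        (-1 : ℝ) ^ (r - j) * (Nat.choose n j : ℝ) * (Nat.choose (n - j - 1) (r - j) : ℝ) * x ^ j := by
  induction r with
  | zero => simp
  | succ r ih =>
    rw [sum_range_succ, ih (by omega), alternating_choose_sum_add_choose_mul_sub_one_pow (by omega)]
end

section
/- For non-negative integers t, r, the polynomial identity x^r * p_{r,t}(1/x) evaluated after the substitution x -> x+1 equals x^r * q_{r,t+r+1}(1/x); that is, for all nonzero real x, sum_{j=0}^{r} C(t+j,j) (x+1)^{r-j} = x^r * sum_{j=0}^{r} C(t+r+1, j) (1/x)^j. -/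
lemma key_sum_identity (t : ℕ) : ∀ (r : ℕ) (y : ℝ),
    ∑ j ∈ Finset.range (r + 1), (Nat.choose (t + j) j : ℝ) * (y + 1) ^ (r - j)
      = ∑ j ∈ Finset.range (r + 1), (Nat.choose (t + r + 1) j : ℝ) * y ^ (r - j) := by
  intro r
  induction r with
  | zero => simp
  | succ r ih =>
    intro y
    rw [Finset.sum_range_succ]
    have h1 : ∑ j ∈ Finset.range (r+1), (Nat.choose (t+j) j : ℝ) * (y+1)^(r+1-j)
        = (y+1) * ∑ j ∈ Finset.range (r+1), (Nat.choose (t+j) j : ℝ) * (y+1)^(r-j) := by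
      rw [Finset.mul_sum]
      refine Finset.sum_congr rfl fun j hj => ?_
      have hj' : r + 1 - j = (r - j) + 1 := by
        have := Finset.mem_range.mp hj; omega
      rw [hj', pow_succ]; ring
    rw [h1, ih y]
    have h2 : ∑ j ∈ Finset.range (r+1+1), (Nat.choose (t+(r+1)+1) j : ℝ) * y ^ (r+1-j)
        = (∑ i ∈ Finset.range (r+1), ((Nat.choose (t+r+1) i : ℝ) + (Nat.choose (t+r+1) (i+1) : ℝ)) * y ^ (r-i)) + y ^ (r+1) := by
      rw [Finset.sum_range_succ' (fun j => (Nat.choose (t+(r+1)+1) j : ℝ) * y ^ (r+1-j))]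
      simp only [Nat.succ_sub_succ, Nat.sub_zero, Nat.choose_zero_right, Nat.cast_one, one_mul]
      congr 1
      refine Finset.sum_congr rfl fun i hi => ?_
      have : t+(r+1)+1 = (t+r+1)+1 := by omega
      rw [this, Nat.choose_succ_succ]
      push_cast
      ring
    rw [h2]
    simp only [add_mul, Nat.add_sub_cancel]
    rw [Finset.sum_add_distrib, Finset.mul_sum]
    have h3 : ∑ j ∈ Finset.range (r+1), y * ((Nat.choose (t+r+1) j : ℝ) * y ^ (r-j))
        = (∑ i ∈ Finset.range r, y * ((Nat.choose (t+r+1) (i+1) : ℝ) * y ^ (r-(i+1)))) + y ^ (r+1) := by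
      rw [Finset.sum_range_succ' (fun j => y * ((Nat.choose (t+r+1) j : ℝ) * y ^ (r-j)))]
      simp [pow_succ]
      ring
    have h4 : ∑ i ∈ Finset.range (r+1), (Nat.choose (t+r+1) (i+1) : ℝ) * y ^ (r-i)
        = (∑ i ∈ Finset.range r, (Nat.choose (t+r+1) (i+1) : ℝ) * y ^ (r-i)) + (Nat.choose (t+r+1) (r+1) : ℝ) := by
      rw [Finset.sum_range_succ]
      simp
    have h5 : ∀ i ∈ Finset.range r, y * ((Nat.choose (t+r+1) (i+1) : ℝ) * y ^ (r-(i+1)))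
        = (Nat.choose (t+r+1) (i+1) : ℝ) * y ^ (r-i) := by
      intro i hi
      have := Finset.mem_range.mp hi
      have he : r - i = (r - (i+1)) + 1 := by omega
      rw [he, pow_succ]; ring
    rw [h3, Finset.sum_congr rfl h5, h4]
    have : t + (r+1) = t + r + 1 := by omega
    rw [this]
    simp
    ring

theorem reversed_shift_eq_reversed_q (r t : ℕ) (x : ℝ) (hx : x ≠ 0) :
    ∑ j ∈ Finset.range (r + 1), (Nat.choose (t + j) j : ℝ) * (x + 1) ^ (r - j) =
      x ^ r * ∑ j ∈ Finset.range (r + 1), (Nat.choose (t + r + 1) j : ℝ) * (1 / x) ^ j := by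
  rw [key_sum_identity t r x, Finset.mul_sum]
  refine Finset.sum_congr rfl fun j hj => ?_
  have hjr : j ≤ r := by have := Finset.mem_range.mp hj; omega
  rw [pow_sub₀ x hx hjr, one_div, inv_pow]
  field_simp
end

section
/- For integers r >= 2 and t >= 0, the discriminant of the polynomial p_{r,t}(x) = sum_{j=0}^{r} C(t+j, j) x^j equals (-1)^{r(r-1)/2} * (t+1)^{r-1} * (t+r+1)^{r-1} * ((t+2)(t+3)...(t+r))^{r-2} / (r!)^{r-2}. -/
/-!
The polynomial `f = p_{r,t}` is the truncation at degree `r` of `(1 - x)^{-(t+1)}`, which solves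
`(1 - x) g' = (t + 1) g`; truncating leaves the single boundary term
`(t + 1) f - (1 - x) f' = K x^r` with `K = (t + r + 1) C(t + r, r)`.
In the Sylvester matrix, replace each row `x^k f` by
`(t + 1) x^k f - x^k f' + x^{k+1} f' = K x^{k+r}`, using only rows `x^j f'` lying below it.
This multiplies the determinant by `(t + 1)^{r-1}` and leaves a triangular matrix with diagonal
entries `K` (`r - 1` times) and `f'(0) = t + 1` (`r` times), so `Res(f, f') = (t + 1) K^{r-1}`.
The formula follows from `(t + 1)(t + 2) ⋯ (t + r) = r! C(t + r, r)`.
-/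

open Polynomial

/-- The Sylvester matrix of a polynomial `f` of degree `r` and its derivative `f'`,
whose determinant is the resultant `Res(f, f')`.  The first `r - 1` rows contain shifted
copies of the coefficients of `f` (in descending order) and the last `r` rows contain
shifted copies of the coefficients of `f'`. -/
noncomputable def sylvesterWithDeriv (r : ℕ) (f : Polynomial ℚ) :
    Matrix (Fin (2 * r - 1)) (Fin (2 * r - 1)) ℚ :=
  fun i j =>
    if (i : ℕ) < r - 1 then
      if (i : ℕ) ≤ (j : ℕ) ∧ (j : ℕ) ≤ (i : ℕ) + r then f.coeff (r + (i : ℕ) - (j : ℕ)) else 0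
    else
      if (i : ℕ) - (r - 1) ≤ (j : ℕ) ∧ (j : ℕ) ≤ (i : ℕ) then
        (Polynomial.derivative f).coeff (r - 1 + ((i : ℕ) - (r - 1)) - (j : ℕ))
      else 0

/-- `Res(f, f')` for a polynomial of degree `r`. -/
noncomputable def resWithDeriv (r : ℕ) (f : Polynomial ℚ) : ℚ :=
  (sylvesterWithDeriv r f).det

/-- The truncated binomial polynomial `p_{r,t}(x) = ∑_{j=0}^r C(t+j, j) x^j`. -/
noncomputable def pPoly (r t : ℕ) : Polynomial ℚ :=
  ∑ j ∈ Finset.range (r + 1), Polynomial.C (Nat.choose (t + j) j : ℚ) * Polynomial.X ^ j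

open Finset

theorem Matrix.det_of_eq_prod_mul_det_of_sub_smul_mem_span {R n : Type*} [CommRing R]
    [Fintype n] [DecidableEq n] [LinearOrder n] (A B : n → n → R) (c : n → R)
    (h : ∀ i, B i - c i • A i ∈ Submodule.span R (A '' Set.Ioi i)) :
    (Matrix.of B).det = (∏ i, c i) * (Matrix.of A).det := by
  choose l hl hlA using fun i => (Finsupp.mem_span_image_iff_linearCombination R).mp (h i)
  have hl_eq_zero (i j : n) (hij : ¬ i < j) : l i j = 0 :=
    Finsupp.notMem_support_iff.mp fun hj => hij (hl i hj)
  set L : Matrix n n R := Matrix.diagonal c + Matrix.of fun i j => l i j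
  have hB : Matrix.of B = L * Matrix.of A := by
    ext i k
    have hrow := hlA i
    rw [Finsupp.linearCombination_apply, Finsupp.sum_fintype _ _ (by simp)] at hrow
    have hentry := congrFun hrow k
    simp only [Finset.sum_apply, Pi.smul_apply, smul_eq_mul, Pi.sub_apply] at hentry
    rw [Matrix.add_mul, Matrix.add_apply, Matrix.diagonal_mul, Matrix.mul_apply]
    simp only [Matrix.of_apply, hentry]
    ring
  have hL : L.IsUpperTriangular := by
    intro i j (hji : j < i)
    simp [L, hl_eq_zero i j (not_lt_of_gt hji), Matrix.diagonal_apply_ne c (ne_of_lt hji).symm]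
  rw [hB, Matrix.det_mul, Matrix.det_of_isUpperTriangular hL]
  congr 1
  refine Finset.prod_congr rfl fun i _ => ?_
  simp [L, hl_eq_zero i i (lt_irrefl i)]

theorem Fin.prod_univ_ite_val_lt {M : Type*} [CommMonoid M] {n m : ℕ} (hmn : m ≤ n) (a b : M) :
    ∏ i : Fin n, (if (i : ℕ) < m then a else b) = a ^ m * b ^ (n - m) := by
  rw [Fin.prod_univ_eq_prod_range (fun i => if i < m then a else b),
    ← prod_range_mul_prod_Ico _ hmn, prod_congr rfl fun i hi => if_pos (mem_range.mp hi),
    prod_congr rfl fun i hi => if_neg (not_lt.mpr (mem_Ico.mp hi).1), Finset.prod_const,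
    Finset.prod_const, card_range, Nat.card_Ico]

namespace Polynomial

variable {R : Type*}

def descCoeffMatrix [Semiring R] (n : ℕ) (q : Fin n → R[X]) : Matrix (Fin n) (Fin n) R :=
  Matrix.of fun i j => (q i).coeff j.rev

theorem coeff_X_mul_derivative [Semiring R] (p : R[X]) (m : ℕ) :
    (X * derivative p).coeff m = p.coeff m * m := by
  rcases m with _ | m
  · simp
  · rw [coeff_X_mul, coeff_derivative, Nat.cast_succ]

variable [CommRing R] {n : ℕ}

theorem det_descCoeffMatrix_of_sub_smul_mem_span (q q' : Fin n → R[X]) (c : Fin n → R)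
    (h : ∀ i, q' i - c i • q i ∈ Submodule.span R (q '' Set.Ioi i)) :
    (descCoeffMatrix n q').det = (∏ i, c i) * (descCoeffMatrix n q).det := by
  let φ : R[X] →ₗ[R] Fin n → R := LinearMap.pi fun j => lcoeff R j.rev
  refine Matrix.det_of_eq_prod_mul_det_of_sub_smul_mem_span (φ ∘ q) (φ ∘ q') c fun i => ?_
  rw [Set.image_comp, Submodule.span_image φ]
  simpa only [Function.comp_apply, map_sub, map_smul] using
    Submodule.mem_map_of_mem (f := φ) (h i)

theorem det_descCoeffMatrix_of_X_pow_dvd (q : Fin n → R[X])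
    (h : ∀ i, X ^ (i.rev : ℕ) ∣ q i) :
    (descCoeffMatrix n q).det = ∏ i, (q i).coeff i.rev :=
  Matrix.det_of_isLowerTriangular _ fun i j (hij : i < j) =>
    X_pow_dvd_iff.mp (h i) _ (Fin.rev_lt_rev.mpr hij)

end Polynomial

noncomputable def sylvesterRow (r : ℕ) (f : ℚ[X]) (i : ℕ) : ℚ[X] :=
  if i < r - 1 then X ^ (r - 2 - i) * f else X ^ (2 * r - 2 - i) * derivative f

theorem sylvesterWithDeriv_eq_descCoeffMatrix (r : ℕ) (f : ℚ[X]) (hf : f.natDegree ≤ r) :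
    sylvesterWithDeriv r f = descCoeffMatrix (2 * r - 1) fun i => sylvesterRow r f i := by
  have hf' : (derivative f).natDegree ≤ r - 1 := (natDegree_derivative_le f).trans (by omega)
  ext i j
  have hj := j.isLt
  simp only [sylvesterWithDeriv, descCoeffMatrix, sylvesterRow, Matrix.of_apply, Fin.val_rev]
  split_ifs <;> rw [coeff_X_pow_mul'] <;> split_ifs <;> first
    | (congr 1; omega)
    | omega
    | rfl
    | exact (coeff_eq_zero_of_natDegree_lt (by omega)).symm

theorem coeff_pPoly (r t m : ℕ) :
    (pPoly r t).coeff m = if m ≤ r then ((t + m).choose m : ℚ) else 0 := by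
  simp only [pPoly, finsetSum_coeff, coeff_C_mul, coeff_X_pow, mul_ite, mul_one, mul_zero,
    Finset.sum_ite_eq, Finset.mem_range, Nat.lt_succ_iff]

theorem natDegree_pPoly_le (r t : ℕ) : (pPoly r t).natDegree ≤ r :=
  natDegree_le_iff_coeff_eq_zero.mpr fun m hm => by
    rw [coeff_pPoly, if_neg (not_le.mpr (by exact_mod_cast hm))]

theorem coeff_derivative_pPoly_zero (r t : ℕ) (hr : 0 < r) :
    (derivative (pPoly r t)).coeff 0 = (t : ℚ) + 1 := by
  simp [coeff_derivative, coeff_pPoly, Nat.one_le_iff_ne_zero.mpr hr.ne']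

theorem C_mul_pPoly_sub_one_sub_X_mul_derivative (r t : ℕ) :
    C ((t : ℚ) + 1) * pPoly r t - (1 - X) * derivative (pPoly r t) =
      C (((t : ℚ) + r + 1) * (t + r).choose r) * X ^ r := by
  ext m
  simp only [sub_mul, one_mul, coeff_sub, coeff_C_mul, coeff_X_mul_derivative, coeff_derivative,
    coeff_pPoly, coeff_X_pow, ← add_assoc]
  rcases lt_trichotomy m r with hm | rfl | hm
  · rw [if_pos hm.le, if_pos (Nat.succ_le_of_lt hm), if_neg hm.ne]
    have hchoose :
        ((t : ℚ) + m + 1) * (t + m).choose m = (t + m + 1).choose (m + 1) * (m + 1) := by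
      exact_mod_cast Nat.add_one_mul_choose_eq (t + m) m
    linear_combination hchoose
  · rw [if_pos le_rfl, if_neg (by omega), if_pos rfl]
    ring
  · rw [if_neg (by omega), if_neg (by omega), if_neg (by omega)]
    ring

theorem C_mul_X_pow_sub_C_mul_sylvesterRow_pPoly (r t : ℕ) {i : ℕ} (hi : i < r - 1) :
    C (((t : ℚ) + r + 1) * (t + r).choose r) * X ^ (2 * r - 2 - i) -
        C ((t : ℚ) + 1) * sylvesterRow r (pPoly r t) i =
      sylvesterRow r (pPoly r t) (r + i - 1) - sylvesterRow r (pPoly r t) (r + i) := by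
  simp only [sylvesterRow, if_pos hi, if_neg (show ¬ r + i - 1 < r - 1 by omega),
    if_neg (show ¬ r + i < r - 1 by omega)]
  rw [show 2 * r - 2 - (r + i - 1) = r - 2 - i + 1 by omega,
    show 2 * r - 2 - (r + i) = r - 2 - i by omega, show 2 * r - 2 - i = r - 2 - i + r by omega]
  linear_combination -X ^ (r - 2 - i) * C_mul_pPoly_sub_one_sub_X_mul_derivative r t

theorem resWithDeriv_pPoly (r t : ℕ) (hr : 0 < r) :
    resWithDeriv r (pPoly r t) =
      ((t : ℚ) + 1) * (((t : ℚ) + r + 1) * (t + r).choose r) ^ (r - 1) := by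
  set K : ℚ := ((t : ℚ) + r + 1) * (t + r).choose r
  set q : Fin (2 * r - 1) → ℚ[X] := fun i => sylvesterRow r (pPoly r t) i
  set q' : Fin (2 * r - 1) → ℚ[X] := fun i =>
    if (i : ℕ) < r - 1 then C K * X ^ (2 * r - 2 - i) else q i
  set c : Fin (2 * r - 1) → ℚ := fun i => if (i : ℕ) < r - 1 then (t : ℚ) + 1 else 1
  have hrev (i : Fin (2 * r - 1)) : (i.rev : ℕ) = 2 * r - 2 - i := by rw [Fin.val_rev]; omega
  have hspan (i : Fin (2 * r - 1)) :
      q' i - c i • q i ∈ Submodule.span ℚ (q '' Set.Ioi i) := by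
    by_cases hi : (i : ℕ) < r - 1
    · have hmem (j : ℕ) (hij : (i : ℕ) < j) (hj : j < 2 * r - 1) :
          q ⟨j, hj⟩ ∈ Submodule.span ℚ (q '' Set.Ioi i) :=
        Submodule.subset_span ⟨⟨j, hj⟩, hij, rfl⟩
      simp only [q', c, if_pos hi, smul_eq_C_mul]
      rw [C_mul_X_pow_sub_C_mul_sylvesterRow_pPoly r t hi]
      exact sub_mem (hmem _ (by omega) (by omega)) (hmem _ (by omega) (by omega))
    · simp [q', c, hi]
  have hdvd (i : Fin (2 * r - 1)) : X ^ (i.rev : ℕ) ∣ q' i := by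
    rw [hrev]
    by_cases hi : (i : ℕ) < r - 1
    · simp only [q', if_pos hi]
      exact dvd_mul_left _ _
    · simp only [q', q, sylvesterRow, if_neg hi]
      exact dvd_mul_right _ _
  have hdiag (i : Fin (2 * r - 1)) :
      (q' i).coeff i.rev = if (i : ℕ) < r - 1 then K else (t : ℚ) + 1 := by
    rw [hrev]
    by_cases hi : (i : ℕ) < r - 1
    · simp [q', hi]
    · simp [q', q, sylvesterRow, hi, coeff_X_pow_mul', coeff_derivative_pPoly_zero r t hr]
  have hdet := det_descCoeffMatrix_of_sub_smul_mem_span q q' c hspan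
  rw [det_descCoeffMatrix_of_X_pow_dvd q' hdvd,
    ← sylvesterWithDeriv_eq_descCoeffMatrix r _ (natDegree_pPoly_le r t)] at hdet
  simp only [hdiag, c, Fin.prod_univ_ite_val_lt (by omega : r - 1 ≤ 2 * r - 1)] at hdet
  rw [show 2 * r - 1 - (r - 1) = r - 1 + 1 by omega, one_pow, mul_one, pow_succ] at hdet
  refine mul_left_cancel₀ (pow_ne_zero (r - 1) (by positivity : (t : ℚ) + 1 ≠ 0)) ?_
  rw [resWithDeriv, ← hdet]
  ring

open Nat in
theorem add_one_mul_prod_Icc_two_eq_factorial_mul_choose (t : ℕ) {r : ℕ} (hr : 1 ≤ r) :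
    ((t : ℚ) + 1) * ∏ i ∈ Icc 2 r, ((t : ℚ) + i) = r ! * (t + r).choose r := by
  induction r, hr using Nat.le_induction with
  | base => simp
  | succ r hr ih =>
    have hchoose :
        ((t : ℚ) + r + 1) * (t + r).choose r = (t + r + 1).choose (r + 1) * (r + 1) := by
      exact_mod_cast Nat.add_one_mul_choose_eq (t + r) r
    rw [prod_Icc_succ_top (by omega), ← mul_assoc, ih, factorial_succ, ← add_assoc]
    push_cast
    linear_combination (r ! : ℚ) * hchoose

/-- The discriminant of `p_{r,t}`, which has degree `r` and leading coefficient
`C(t+r, r)`, computed as `(-1)^{r(r-1)/2} / c * Res(f, f')`. -/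
theorem discriminant_pPoly (r t : ℕ) (hr : 2 ≤ r) :
    (-1 : ℚ) ^ (r * (r - 1) / 2) / (Nat.choose (t + r) r : ℚ) * resWithDeriv r (pPoly r t) =
      (-1 : ℚ) ^ (r * (r - 1) / 2) *
        ((t : ℚ) + 1) ^ (r - 1) * ((t : ℚ) + (r : ℚ) + 1) ^ (r - 1) *
        (∏ i ∈ Finset.Icc 2 r, ((t : ℚ) + (i : ℚ))) ^ (r - 2) /
        ((Nat.factorial r : ℚ)) ^ (r - 2) := by
  obtain ⟨s, rfl⟩ : ∃ s, r = s + 2 := ⟨r - 2, by omega⟩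
  have hprod := congrArg (· ^ s)
    (add_one_mul_prod_Icc_two_eq_factorial_mul_choose t (r := s + 2) (by omega))
  simp only [mul_pow] at hprod
  have hc : ((t + (s + 2)).choose (s + 2) : ℚ) ≠ 0 := by
    exact_mod_cast (Nat.choose_pos (by omega)).ne'
  have hF : ((s + 2).factorial : ℚ) ^ s ≠ 0 := by positivity
  rw [resWithDeriv_pPoly _ t (by omega), show s + 2 - 1 = s + 1 by omega, Nat.add_sub_cancel,
    mul_pow, div_mul_eq_mul_div, div_eq_div_iff hc hF]
  linear_combination (-(-1 : ℚ) ^ ((s + 2) * (s + 1) / 2) * ((t : ℚ) + 1) *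
    ((t : ℚ) + (s + 2 : ℕ) + 1) ^ (s + 1) * (t + (s + 2)).choose (s + 2)) * hprod
end

section
/- For the exponential truncation g(x) = sum_{j=0}^{r} x^j / j! with r >= 1, the resultant of g and its derivative g' equals 1/(r!)^{r-1}. -/
open Polynomial

/-- For the exponential truncation `g(x) = ∑_{j=0}^r x^j / j!`, one has
`Res(g, g') = 1 / (r!)^{r-1}`. -/
theorem res_exponential_truncation (r : ℕ) (hr : 1 ≤ r) :
    resWithDeriv r
        (∑ j ∈ Finset.range (r + 1),
          Polynomial.C (1 / (Nat.factorial j : ℚ)) * Polynomial.X ^ j) =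
      1 / ((Nat.factorial r : ℚ)) ^ (r - 1) := by

  set g : Polynomial ℚ := ∑ j ∈ Finset.range (r + 1),
      Polynomial.C (1 / (Nat.factorial j : ℚ)) * Polynomial.X ^ j with hgdef
  have hg : ∀ k, g.coeff k = if k ≤ r then 1 / (Nat.factorial k : ℚ) else 0 := by
    intro k
    rw [hgdef, Polynomial.finset_sum_coeff]
    simp only [Polynomial.coeff_C_mul, Polynomial.coeff_X_pow, mul_ite, mul_one, mul_zero]
    rw [Finset.sum_ite_eq (Finset.range (r+1)) k]
    simp [Nat.lt_succ_iff]
  have hg' : ∀ k, (derivative g).coeff k = if k + 1 ≤ r then 1 / (Nat.factorial k : ℚ) else 0 := by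
    intro k
    rw [Polynomial.coeff_derivative, hg (k+1)]
    split_ifs with h
    · rw [Nat.factorial_succ]
      have h1 : (Nat.factorial k : ℚ) ≠ 0 := Nat.cast_ne_zero.mpr (Nat.factorial_ne_zero k)
      have h2 : ((k:ℚ) + 1) ≠ 0 := by positivity
      push_cast
      field_simp
    · simp
  set A := sylvesterWithDeriv r g with hA
  set E : Matrix (Fin (2*r-1)) (Fin (2*r-1)) ℚ := fun i j =>
    if i = j then 1 else if (i:ℕ) < r - 1 ∧ (j:ℕ) = (i:ℕ) + r then -1 else 0 with hE
  have hEdet : E.det = 1 := by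
    have ht : E.BlockTriangular id := by
      intro i j hji
      have hv : (j:ℕ) < (i:ℕ) := hji
      simp only [hE]
      rw [if_neg, if_neg]
      · rintro ⟨-, h2⟩; omega
      · intro h; subst h; omega
    rw [Matrix.det_of_upperTriangular ht]
    simp [hE]
  have key : ∀ i j : Fin (2*r-1), (E * A) i j =
      if (i:ℕ) < r - 1 then (if (j:ℕ) = (i:ℕ) then 1 / (Nat.factorial r : ℚ) else 0)
      else A i j := by
    intro i j
    rw [Matrix.mul_apply]
    by_cases hi : (i:ℕ) < r - 1
    · have hir : (i:ℕ) + r < 2*r - 1 := by omega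
      set i' : Fin (2*r-1) := ⟨(i:ℕ) + r, hir⟩ with hi'
      have hterm : ∀ k, E i k * A k j =
          (if k = i then A k j else 0) + (if k = i' then -A k j else 0) := by
        intro k
        simp only [hE, hi', Fin.ext_iff]
        split_ifs <;> first | ring1 | (exfalso; omega)
      rw [Finset.sum_congr rfl (fun k _ => hterm k), Finset.sum_add_distrib,
        Finset.sum_ite_eq' Finset.univ i, Finset.sum_ite_eq' Finset.univ i']
      simp only [Finset.mem_univ, ite_true]
      rw [if_pos hi]
      have e0 : ((⟨(i:ℕ)+r, hir⟩ : Fin (2*r-1)) : ℕ) = (i:ℕ)+r := rfl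
      simp only [hA, sylvesterWithDeriv, hi', e0]
      rw [if_pos hi, if_neg (show ¬ ((i:ℕ)+r < r-1) by omega)]
      rw [show r - 1 + ((i:ℕ) + r - (r - 1)) - (j:ℕ) = r + (i:ℕ) - (j:ℕ) from by omega]
      by_cases hj : (j:ℕ) = (i:ℕ)
      · rw [if_pos hj, show r + (i:ℕ) - (j:ℕ) = r from by omega, hg, hg']
        split_ifs <;> first | ring1 | (exfalso; omega)
      · rw [if_neg hj, hg, hg']
        split_ifs <;> first | ring1 | (exfalso; omega)
    · have hterm : ∀ k, E i k * A k j = if k = i then A k j else 0 := by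
        intro k
        simp only [hE, Fin.ext_iff]
        split_ifs <;> first | ring1 | (exfalso; omega)
      rw [Finset.sum_congr rfl (fun k _ => hterm k), Finset.sum_ite_eq' Finset.univ i]
      simp only [Finset.mem_univ, ite_true]
      rw [if_neg hi]
  have hdetEA : (E * A).det = (1 / (Nat.factorial r : ℚ)) ^ (r - 1) := by
    have ht : (E * A).BlockTriangular OrderDual.toDual := by
      intro i j hij
      have hij' : (i:ℕ) < (j:ℕ) := hij
      rw [key i j]
      by_cases hi : (i:ℕ) < r - 1
      · rw [if_pos hi, if_neg (by omega)]
      · rw [if_neg hi]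
        simp only [hA, sylvesterWithDeriv]
        rw [if_neg hi, if_neg (by rintro ⟨-, h2⟩; omega)]
    rw [Matrix.det_of_lowerTriangular _ ht]
    have hdiag : ∀ i : Fin (2*r-1), (E * A) i i =
        if (i:ℕ) < r - 1 then 1 / (Nat.factorial r : ℚ) else 1 := by
      intro i
      rw [key i i]
      by_cases hi : (i:ℕ) < r - 1
      · rw [if_pos hi, if_pos rfl, if_pos hi]
      · rw [if_neg hi, if_neg hi]
        simp only [hA, sylvesterWithDeriv]
        rw [if_neg hi,
          if_pos (show (i:ℕ) - (r-1) ≤ (i:ℕ) ∧ (i:ℕ) ≤ (i:ℕ) from ⟨by omega, le_rfl⟩),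
          show r - 1 + ((i:ℕ) - (r - 1)) - (i:ℕ) = 0 from by omega, hg', if_pos (by omega)]
        simp
    rw [Finset.prod_congr rfl (fun i _ => hdiag i)]
    rw [Fin.prod_univ_eq_prod_range (fun k => if k < r - 1 then 1 / (Nat.factorial r : ℚ) else 1)]
    rw [show 2*r - 1 = (r - 1) + r from by omega, Finset.prod_range_add]
    rw [Finset.prod_congr rfl (fun k hk => if_pos (Finset.mem_range.mp hk)),
      Finset.prod_congr rfl (fun k _ => if_neg (by omega)),
      Finset.prod_const, Finset.prod_const, one_pow, mul_one, Finset.card_range]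
  have hfin := Matrix.det_mul E A
  rw [hdetEA, hEdet, one_mul] at hfin
  show (sylvesterWithDeriv r g).det = _
  rw [← hA, ← hfin, div_pow, one_pow]
end

section
/- Let r >= 2 be even and t >= r*(r-1)^2/4 be an integer. Then (t+1)*(t+r+1) is not a perfect square. -/
theorem not_square_of_large_t (r t : ℤ) (hr : 2 ≤ r) (hre : Even r)
    (ht : ((r : ℚ) * ((r : ℚ) - 1) ^ 2) / 4 ≤ (t : ℚ)) :
    ¬ ∃ k : ℤ, (t + 1) * (t + r + 1) = k ^ 2 := by
  rintro ⟨k, hk⟩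
  obtain ⟨s, rfl⟩ := hre
  have hs1 : 1 ≤ s := by linarith
  have htQ : ((s + s : ℤ) * ((s + s : ℤ) - 1) ^ 2 : ℚ) ≤ 4 * (t : ℚ) := by
    push_cast at ht ⊢; linarith
  have htZ : (s + s) * ((s + s) - 1) ^ 2 ≤ 4 * t := by exact_mod_cast htQ
  set m : ℤ := t + 1 + s with hm
  have hmpos : 1 ≤ m := by nlinarith
  have hkm : k ^ 2 < m ^ 2 := by nlinarith
  have habs : |k| < m := by
    refine lt_of_pow_lt_pow_left₀ 2 (by linarith) ?_
    rwa [sq_abs]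
  have h2 : k ^ 2 ≤ (m - 1) ^ 2 := by
    have h3 : |k| ≤ m - 1 := by omega
    calc k ^ 2 = |k| ^ 2 := (sq_abs k).symm
    _ ≤ (m - 1) ^ 2 := by
        apply pow_le_pow_left₀ (abs_nonneg k) h3
  nlinarith
end

section
/- Suppose t, r, delta are positive integers with delta = gcd(t+1, t+r+1), and both (t+1)/delta and (t+r+1)/delta are perfect squares. Then t+1 <= r*(r-1)^2/4. -/
theorem bound_from_squares (t r δ : ℕ) (ht : 0 < t) (hr : 2 ≤ r) (hδ : 0 < δ)
    (hgcd : δ = Nat.gcd (t + 1) (t + r + 1))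
    (h1 : ∃ n : ℕ, (t + 1) / δ = n ^ 2) (h2 : ∃ m : ℕ, (t + r + 1) / δ = m ^ 2) :
    ((t : ℚ) + 1) ≤ (r : ℚ) * ((r : ℚ) - 1) ^ 2 / 4 := by
  obtain ⟨n, hn⟩ := h1
  obtain ⟨m, hm⟩ := h2
  have hd1 : δ ∣ t + 1 := hgcd ▸ Nat.gcd_dvd_left _ _
  have hd2 : δ ∣ t + r + 1 := hgcd ▸ Nat.gcd_dvd_right _ _
  have e1 : t + 1 = δ * n ^ 2 := by
    rw [← hn, Nat.mul_div_cancel' hd1]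
  have e2 : t + r + 1 = δ * m ^ 2 := by
    rw [← hm, Nat.mul_div_cancel' hd2]
  have hn1 : 1 ≤ n := by
    by_contra h
    interval_cases n <;> omega
  have hmn : n < m := by
    by_contra h
    push_neg at h
    have : m ^ 2 ≤ n ^ 2 := Nat.pow_le_pow_left h 2
    nlinarith
  have hm1 : n + 1 ≤ m := hmn
  have hm2 : n ^ 2 + 2 * n + 1 ≤ m ^ 2 := by nlinarith
  have hr2 : 2 * n + 1 ≤ r := by nlinarith
  have hdr : δ ≤ r := by
    have hdvd : δ ∣ r := by
      have := Nat.dvd_sub hd2 hd1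
      have heq : t + r + 1 - (t + 1) = r := by omega
      rwa [heq] at this
    exact Nat.le_of_dvd (by omega) hdvd
  have q1 : ((t : ℚ) + 1) = (δ : ℚ) * (n : ℚ) ^ 2 := by exact_mod_cast e1
  have q2 : (δ : ℚ) ≤ (r : ℚ) := by exact_mod_cast hdr
  have q3 : 2 * (n : ℚ) + 1 ≤ (r : ℚ) := by exact_mod_cast hr2
  have q4 : (1 : ℚ) ≤ (n : ℚ) := by exact_mod_cast hn1
  have q5 : (0 : ℚ) < (δ : ℚ) := by exact_mod_cast hδ
  rw [q1, le_div_iff₀ (by norm_num : (0:ℚ) < 4)]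
  nlinarith [sq_nonneg ((n : ℚ) - 1), sq_nonneg ((r : ℚ) - 1 - 2 * n)]
end
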